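/- On a 3-dimensional parallelizable manifold, the linear curvature tensor R^i_{jk} (antisymmetric in j,k) of a frame vanishes identically if and only if its contraction tensor H vanishes identically; i.e., in dimension 3 the 'Ricci-type' trace of the structure-constant curvature determines the full curvature. -/
import Mathlib


open Finset in
/-- The Levi-Civita symbol `ε` on three indices. -/
def levicivita : Fin 3 → Fin 3 → Fin 3 → ℝ := fun i j k =>
  if (i, j, k) = (0, 1, 2) ∨ (i, j, k) = (1, 2, 0) ∨ (i, j, k) = (2, 0, 1) then 1
  else if (i, j, k) = (0, 2, 1) ∨ (i, j, k) = (2, 1, 0) ∨ (i, j, k) = (1, 0, 2) then -1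
  else 0

open Finset in
/-- The `H`-tensor: the contraction (via the isomorphism `Λ²ℝ³ ≅ ℝ³` given by the
Levi-Civita symbol) of a curvature tensor `R^i_{jk}` antisymmetric in `j, k`. -/
def contractionH (R : Fin 3 → Fin 3 → Fin 3 → ℝ) : Fin 3 → Fin 3 → ℝ := fun i k =>
  ∑ j : Fin 3, ∑ l : Fin 3, levicivita k j l * R i j l

/-- linear-algebraic core of Corollary 13.8 of [O]: in dimension 3, for a
curvature tensor `R^i_{jk}` antisymmetric in its two lower indices, the contraction
tensor `H` vanishes iff `R` vanishes; i.e. the contraction map is injective on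
antisymmetric tensors. -/
theorem curvature_vanishes_iff_contraction_vanishes
    (R : Fin 3 → Fin 3 → Fin 3 → ℝ) (hR : ∀ i j k, R i j k = - R i k j) :
    (∀ i k, contractionH R i k = 0) ↔ ∀ i j k, R i j k = 0 := by
  constructor
  · intro h i j k
    have h0 := h i 0
    have h1 := h i 1
    have h2 := h i 2
    simp only [contractionH, levicivita, Fin.sum_univ_three] at h0 h1 h2
    norm_num [Prod.ext_iff, Fin.ext_iff] at h0 h1 h2
    fin_cases j <;> fin_cases k <;> simp <;>
      linarith [hR i 0 0, hR i 1 1, hR i 2 2, hR i 0 1, hR i 0 2, hR i 1 2]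
  · intro h i k
    simp [contractionH, h]
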